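/- arXiv:1108.3329 — 3 statements merged into one kernel-verified Lean document; each statement's English description precedes it below -/
import Mathlib

section
/- Let x ∈ R^n be a random vector whose components along orthogonal complementary subspaces V and W are independent, suppose m is odd, and suppose E[(x^T v)^j] = 0 for every unit vector v and every odd j < m. Then for every unit vector u ∈ R^n, E[(x^T u)^m] = ||u_V||^m · E[(x_V^T u_V^0)^m] + ||u_W||^m · E[(x_W^T u_W^0)^m], where u_V = π_V(u), u_W = π_W(u), and u_V^0, u_W^0 are the corresponding unit vectors. -/
/-!
Write `⟪x, u⟫ = ⟪x, u_V⟫ + ⟪x, u_W⟫` and expand the `m`-th power binomially. The two summands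
are functions of `x_V` and `x_W`, hence independent, so each mixed moment factors as
`E⟪x, u_V⟫^k · E⟪x, u_W⟫^(m-k)`. Since `m` is odd, for `0 < k < m` one of the two exponents is
odd and `< m`, so the factor vanishes by homogeneity of the hypothesis; only `k = 0, m` survive.
-/

open MeasureTheory ProbabilityTheory

section InnerProductSpace

variable {E : Type*} [NormedAddCommGroup E] [InnerProductSpace ℝ E]

theorem Submodule.inner_orthogonalProjectionOnto_left_of_mem (K : Submodule ℝ E)
    [K.HasOrthogonalProjection] {w : E} (hw : w ∈ K) (y : E) :
    inner ℝ (K.orthogonalProjectionOnto y : E) w = inner ℝ y w :=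
  K.inner_orthogonalProjectionOnto_eq_of_mem_right ⟨w, hw⟩ y

variable {Ω : Type*} [MeasurableSpace Ω] {P : Measure Ω}

theorem integrable_inner_pow {x : Ω → E} (hx : AEStronglyMeasurable x P) {k : ℕ}
    (hk : Integrable (fun ω => ‖x ω‖ ^ k) P) (w : E) :
    Integrable (fun ω => inner ℝ (x ω) w ^ k) P := by
  refine (hk.const_mul (‖w‖ ^ k)).mono'
    (((continuous_id.inner continuous_const).pow k).comp_aestronglyMeasurable hx) ?_
  filter_upwards with ω
  calc ‖inner ℝ (x ω) w ^ k‖ = |inner ℝ (x ω) w| ^ k := by rw [Real.norm_eq_abs, abs_pow]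
    _ ≤ (‖x ω‖ * ‖w‖) ^ k := by gcongr; exact abs_real_inner_le_norm _ _
    _ = ‖w‖ ^ k * ‖x ω‖ ^ k := by ring

theorem integral_inner_smul_right_pow (x : Ω → E) (c : ℝ) (w : E) (j : ℕ) :
    ∫ ω, inner ℝ (x ω) (c • w) ^ j ∂P = c ^ j * ∫ ω, inner ℝ (x ω) w ^ j ∂P := by
  simp_rw [real_inner_smul_right, mul_pow]
  exact integral_const_mul _ _

theorem integral_inner_pow_eq_zero_of_forall_norm_eq_one {x : Ω → E} {j : ℕ} (hj : j ≠ 0)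
    (h : ∀ v : E, ‖v‖ = 1 → ∫ ω, inner ℝ (x ω) v ^ j ∂P = 0) (w : E) :
    ∫ ω, inner ℝ (x ω) w ^ j ∂P = 0 := by
  rcases eq_or_ne w 0 with rfl | hw
  · simp [zero_pow hj]
  have hw' : ‖w‖ ≠ 0 := norm_ne_zero_iff.mpr hw
  have hunit : ‖‖w‖⁻¹ • w‖ = 1 := by rw [norm_smul, norm_inv, norm_norm, inv_mul_cancel₀ hw']
  rw [← smul_inv_smul₀ hw' w, integral_inner_smul_right_pow, h _ hunit, mul_zero]

theorem norm_pow_mul_integral_inner_inv_norm_smul_pow (y : Ω → E) (w : E) (m : ℕ) :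
    ‖w‖ ^ m * ∫ ω, inner ℝ (y ω) (‖w‖⁻¹ • w) ^ m ∂P = ∫ ω, inner ℝ (y ω) w ^ m ∂P := by
  rw [integral_inner_smul_right_pow, ← mul_assoc, ← mul_pow]
  rcases eq_or_ne w 0 with rfl | hw
  · cases m <;> simp
  · rw [mul_inv_cancel₀ (norm_ne_zero_iff.mpr hw), one_pow, one_mul]

theorem ProbabilityTheory.IndepFun.inner_of_orthogonalProjectionOnto [MeasurableSpace E]
    [OpensMeasurableSpace E] {x : Ω → E} (K : Submodule ℝ E) [K.HasOrthogonalProjection]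
    (hindep : IndepFun (fun ω => (K.orthogonalProjectionOnto (x ω) : E))
      (fun ω => (Kᗮ.orthogonalProjectionOnto (x ω) : E)) P)
    {v w : E} (hv : v ∈ K) (hw : w ∈ Kᗮ) :
    IndepFun (fun ω => inner ℝ (x ω) v) (fun ω => inner ℝ (x ω) w) P := by
  have h := hindep.comp (φ := fun y => inner ℝ y v) (ψ := fun y => inner ℝ y w)
    (continuous_id.inner continuous_const).measurable
    (continuous_id.inner continuous_const).measurable
  simpa only [Function.comp_def, K.inner_orthogonalProjectionOnto_left_of_mem hv,
    Kᗮ.inner_orthogonalProjectionOnto_left_of_mem hw] using h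

end InnerProductSpace

section Moments

variable {Ω : Type*} [MeasurableSpace Ω] {P : Measure Ω} {A B : Ω → ℝ}

theorem ProbabilityTheory.IndepFun.integral_add_pow (hAB : IndepFun A B P) {m : ℕ}
    (hA : ∀ k ≤ m, Integrable (fun ω => A ω ^ k) P)
    (hB : ∀ k ≤ m, Integrable (fun ω => B ω ^ k) P) :
    ∫ ω, (A ω + B ω) ^ m ∂P = ∑ k ∈ Finset.range (m + 1),
      (m.choose k : ℝ) * ((∫ ω, A ω ^ k ∂P) * ∫ ω, B ω ^ (m - k) ∂P) := by
  have hpow (k j : ℕ) : IndepFun (fun ω => A ω ^ k) (fun ω => B ω ^ j) P :=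
    hAB.comp (measurable_id.pow_const k) (measurable_id.pow_const j)
  simp_rw [add_pow]
  rw [integral_finsetSum]
  · refine Finset.sum_congr rfl fun k hk => ?_
    have hkm : k ≤ m := Finset.mem_range_succ_iff.mp hk
    rw [integral_mul_const, (hpow k (m - k)).integral_fun_mul_eq_mul_integral
      (hA k hkm).1 (hB (m - k) (Nat.sub_le m k)).1, mul_comm]
  · intro k hk
    have hkm : k ≤ m := Finset.mem_range_succ_iff.mp hk
    exact ((hpow k (m - k)).integrable_mul (hA k hkm) (hB (m - k) (Nat.sub_le m k))).mul_const _

theorem ProbabilityTheory.IndepFun.integral_add_pow_of_odd [IsProbabilityMeasure P]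
    (hAB : IndepFun A B P) {m : ℕ} (hm : Odd m)
    (hA : ∀ k ≤ m, Integrable (fun ω => A ω ^ k) P)
    (hB : ∀ k ≤ m, Integrable (fun ω => B ω ^ k) P)
    (hA_odd : ∀ k, Odd k → k < m → ∫ ω, A ω ^ k ∂P = 0)
    (hB_odd : ∀ k, Odd k → k < m → ∫ ω, B ω ^ k ∂P = 0) :
    ∫ ω, (A ω + B ω) ^ m ∂P = ∫ ω, A ω ^ m ∂P + ∫ ω, B ω ^ m ∂P := by
  rw [hAB.integral_add_pow hA hB, Finset.sum_eq_add_of_mem m 0 (by simp) (by simp) hm.pos.ne']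
  · simp
  · intro k hk ⟨hkm, hk0⟩
    have hkm : k < m := lt_of_le_of_ne (Finset.mem_range_succ_iff.mp hk) hkm
    rcases Nat.even_or_odd k with hk_even | hk_odd
    · rw [hB_odd (m - k) (Nat.Odd.sub_even hkm.le hm hk_even) (by omega), mul_zero, mul_zero]
    · rw [hA_odd k hk_odd hkm, zero_mul, mul_zero]

end Moments

theorem stmt_3_general {Ω : Type*} [MeasurableSpace Ω] (P : Measure Ω) [IsProbabilityMeasure P]
    (n : ℕ) (x : Ω → EuclideanSpace ℝ (Fin n)) (hxmeas : Measurable x)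
    (V : Submodule ℝ (EuclideanSpace ℝ (Fin n)))
    (hindep : IndepFun
      (fun ω => (Submodule.orthogonalProjectionOnto V (x ω) : EuclideanSpace ℝ (Fin n)))
      (fun ω => (Submodule.orthogonalProjectionOnto Vᗮ (x ω) : EuclideanSpace ℝ (Fin n))) P)
    (m : ℕ) (hm : Odd m)
    (hmoments : ∀ j ≤ m, Integrable (fun ω => ‖x ω‖ ^ j) P)
    (hodd : ∀ v : EuclideanSpace ℝ (Fin n), ‖v‖ = 1 → ∀ j, Odd j → j < m →
      ∫ ω, (inner ℝ (x ω) v : ℝ) ^ j ∂P = 0)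
    (u : EuclideanSpace ℝ (Fin n)) :
    ∫ ω, (inner ℝ (x ω) u : ℝ) ^ m ∂P =
      ‖(Submodule.orthogonalProjectionOnto V u : EuclideanSpace ℝ (Fin n))‖ ^ m *
        ∫ ω, (inner ℝ ((Submodule.orthogonalProjectionOnto V (x ω) : EuclideanSpace ℝ (Fin n)))
          (‖(Submodule.orthogonalProjectionOnto V u : EuclideanSpace ℝ (Fin n))‖⁻¹ •
            (Submodule.orthogonalProjectionOnto V u : EuclideanSpace ℝ (Fin n))) : ℝ) ^ m ∂P
      + ‖(Submodule.orthogonalProjectionOnto Vᗮ u : EuclideanSpace ℝ (Fin n))‖ ^ m *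
        ∫ ω, (inner ℝ ((Submodule.orthogonalProjectionOnto Vᗮ (x ω) : EuclideanSpace ℝ (Fin n)))
          (‖(Submodule.orthogonalProjectionOnto Vᗮ u : EuclideanSpace ℝ (Fin n))‖⁻¹ •
            (Submodule.orthogonalProjectionOnto Vᗮ u : EuclideanSpace ℝ (Fin n))) : ℝ) ^ m ∂P := by
  set uV : EuclideanSpace ℝ (Fin n) := (V.orthogonalProjectionOnto u : EuclideanSpace ℝ (Fin n))
  set uW : EuclideanSpace ℝ (Fin n) := (Vᗮ.orthogonalProjectionOnto u : EuclideanSpace ℝ (Fin n))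
  have huV : uV ∈ V := (V.orthogonalProjectionOnto u).2
  have huW : uW ∈ Vᗮ := (Vᗮ.orthogonalProjectionOnto u).2
  have hu : uV + uW = u := V.starProjection_add_starProjection_orthogonal u
  have hsplit (ω : Ω) : inner ℝ (x ω) u = inner ℝ (x ω) uV + inner ℝ (x ω) uW := by
    rw [← inner_add_right, hu]
  have hint (w) : ∀ k ≤ m, Integrable (fun ω => inner ℝ (x ω) w ^ k) P := fun k hk =>
    integrable_inner_pow hxmeas.aestronglyMeasurable (hmoments k hk) w
  have hodd' (w) (k) (hk : Odd k) (hkm : k < m) : ∫ ω, inner ℝ (x ω) w ^ k ∂P = 0 :=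
    integral_inner_pow_eq_zero_of_forall_norm_eq_one hk.pos.ne' (fun v hv => hodd v hv k hk hkm) w
  simp_rw [hsplit]
  rw [norm_pow_mul_integral_inner_inv_norm_smul_pow, norm_pow_mul_integral_inner_inv_norm_smul_pow]
  simp_rw [V.inner_orthogonalProjectionOnto_left_of_mem huV,
    Vᗮ.inner_orthogonalProjectionOnto_left_of_mem huW]
  exact (hindep.inner_of_orthogonalProjectionOnto V huV huW).integral_add_pow_of_odd hm
    (hint uV) (hint uW) (hodd' uV) (hodd' uW)

/-- Representation of the m-th directional moment (odd m) for a distribution whose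
projections onto a subspace V and its orthogonal complement are independent and whose
odd directional moments of order < m all vanish. -/
theorem stmt_3 {Ω : Type*} [MeasurableSpace Ω] (P : Measure Ω) [IsProbabilityMeasure P]
    (n : ℕ) (x : Ω → EuclideanSpace ℝ (Fin n)) (hxmeas : Measurable x)
    (V : Submodule ℝ (EuclideanSpace ℝ (Fin n)))
    (hindep : IndepFun
      (fun ω => (Submodule.orthogonalProjectionOnto V (x ω) : EuclideanSpace ℝ (Fin n)))
      (fun ω => (Submodule.orthogonalProjectionOnto Vᗮ (x ω) : EuclideanSpace ℝ (Fin n))) P)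
    (m : ℕ) (hm : Odd m)
    (hmoments : ∀ j ≤ m, Integrable (fun ω => ‖x ω‖ ^ j) P)
    (hodd : ∀ v : EuclideanSpace ℝ (Fin n), ‖v‖ = 1 → ∀ j, Odd j → j < m →
      ∫ ω, (inner ℝ (x ω) v : ℝ) ^ j ∂P = 0)
    (u : EuclideanSpace ℝ (Fin n)) (hu : ‖u‖ = 1) :
    ∫ ω, (inner ℝ (x ω) u : ℝ) ^ m ∂P =
      ‖(Submodule.orthogonalProjectionOnto V u : EuclideanSpace ℝ (Fin n))‖ ^ m *
        ∫ ω, (inner ℝ ((Submodule.orthogonalProjectionOnto V (x ω) : EuclideanSpace ℝ (Fin n)))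
          (‖(Submodule.orthogonalProjectionOnto V u : EuclideanSpace ℝ (Fin n))‖⁻¹ •
            (Submodule.orthogonalProjectionOnto V u : EuclideanSpace ℝ (Fin n))) : ℝ) ^ m ∂P
      + ‖(Submodule.orthogonalProjectionOnto Vᗮ u : EuclideanSpace ℝ (Fin n))‖ ^ m *
        ∫ ω, (inner ℝ ((Submodule.orthogonalProjectionOnto Vᗮ (x ω) : EuclideanSpace ℝ (Fin n)))
          (‖(Submodule.orthogonalProjectionOnto Vᗮ u : EuclideanSpace ℝ (Fin n))‖⁻¹ •
            (Submodule.orthogonalProjectionOnto Vᗮ u : EuclideanSpace ℝ (Fin n))) : ℝ) ^ m ∂P :=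
  stmt_3_general P n x hxmeas V hindep m hm hmoments hodd u
end

section
/- (Schwartz–Zippel) Let P be a nonzero polynomial of total degree at most d in n variables over a field F, let S be a finite nonempty subset of F, and let r_1,…,r_n be chosen independently and uniformly at random from S. Then the probability that P(r_1,…,r_n) = 0 is at most d/|S|. -/
theorem stmt_6_general {F : Type*} [Field F] [DecidableEq F] (n d : ℕ)
    (P : MvPolynomial (Fin n) F) (hP : P ≠ 0) (hd : P.totalDegree ≤ d)
    (S : Finset F) :
    (((Fintype.piFinset fun _ : Fin n => S).filter
        fun r => MvPolynomial.eval r P = 0).card : ℝ) / (S.card ^ n : ℝ)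
      ≤ (d : ℝ) / (S.card : ℝ) := by
  have h := NNRat.cast_mono (K := ℝ) (MvPolynomial.schwartz_zippel_totalDegree hP S)
  push_cast at h
  exact h.trans (by gcongr)

/-- Schwartz–Zippel: a nonzero polynomial of total degree at most d over a field F vanishes
on at most a d/|S| fraction of points of Sⁿ. -/
theorem stmt_6 {F : Type*} [Field F] [DecidableEq F] (n d : ℕ)
    (P : MvPolynomial (Fin n) F) (hP : P ≠ 0) (hd : P.totalDegree ≤ d)
    (S : Finset F) (hS : S.Nonempty) :
    (((Fintype.piFinset fun _ : Fin n => S).filter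
        fun r => MvPolynomial.eval r P = 0).card : ℝ) / (S.card ^ n : ℝ)
      ≤ (d : ℝ) / (S.card : ℝ) :=
  stmt_6_general n d P hP hd S
end

section
/- Any isotropic logconcave probability density f on R is bounded above by 1: f(x) ≤ 1 for all x. -/
/-!
For a log-concave `f ≥ 0` the four-point inequality `f 0 * f (x + t) ≤ f x * f t` (`x, t ≥ 0`)
integrates in `t` to `f 0 * G x ≤ f x * G 0`, where `G x = ∫_x^∞ f` is the tail. By the layer-cake
formula the first two moments of `f` on `(0, ∞)` are `∫ G` and `∫ 2t G(t)`, so with `q, A, S` the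
mass, first and second moment of `f` on `(0, ∞)` we get `f 0 * A ≤ q²` and `f 0 * S ≤ 2 q A`; the
same holds on `(-∞, 0)` after reflection. As the two masses add up to `1`, elementary algebra turns
these four bounds into `f 0 ^ 2 * Var f ≤ 1`, and translating the density gives the same bound at
every point.
-/

open MeasureTheory Set
open scoped ENNReal

lemma ConcaveOn.add_le_add_of_add_eq {s : Set ℝ} {h : ℝ → ℝ} (hh : ConcaveOn ℝ s h)
    {a b c d : ℝ} (ha : a ∈ s) (hd : d ∈ s) (hab : a ≤ b) (hbd : b ≤ d) (hsum : a + d = b + c) :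
    h a + h d ≤ h b + h c := by
  rcases hab.eq_or_lt with rfl | hab
  · obtain rfl : c = d := by linarith
    rfl
  have hda : 0 < d - a := by linarith
  have hwa : 0 ≤ (d - b) / (d - a) := div_nonneg (by linarith) hda.le
  have hwb : 0 ≤ (b - a) / (d - a) := div_nonneg (by linarith) hda.le
  have hw : (d - b) / (d - a) + (b - a) / (d - a) = 1 := by field_simp; ring
  have hb := hh.2 ha hd hwa hwb hw
  have hc := hh.2 ha hd hwb hwa (by linarith)
  have hb' : (d - b) / (d - a) * a + (b - a) / (d - a) * d = b := by field_simp; ring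
  have hc' : (b - a) / (d - a) * a + (d - b) / (d - a) * d = c := by
    rw [show c = a + d - b by linarith]; field_simp; ring
  simp only [smul_eq_mul, hb', hc'] at hb hc
  linear_combination hb + hc - (h a + h d) * hw

lemma setLIntegral_Ioi_eq_comp_add (F : ℝ → ℝ≥0∞) (t : ℝ) :
    ∫⁻ x in Ioi t, F x = ∫⁻ s in Ioi 0, F (t + s) := by
  have hpre : (t + ·) ⁻¹' Ioi t = Ioi 0 := by ext s; simp
  rw [← (measurePreserving_add_left volume t).setLIntegral_comp_preimage_emb
    (measurableEmbedding_addLeft t), hpre]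

section HalfLine

variable {F : ℝ → ℝ≥0∞}

lemma mul_setLIntegral_Ioi_le (hF : Measurable F)
    (hmul : ∀ x t, 0 ≤ x → 0 ≤ t → F 0 * F (x + t) ≤ F x * F t) {t : ℝ} (ht : 0 ≤ t) :
    F 0 * ∫⁻ x in Ioi t, F x ≤ F t * ∫⁻ x in Ioi 0, F x := by
  rw [setLIntegral_Ioi_eq_comp_add F t, ← lintegral_const_mul _ hF]
  calc F 0 * ∫⁻ s in Ioi 0, F (t + s) ≤ ∫⁻ s in Ioi 0, F 0 * F (t + s) :=
        lintegral_const_mul_le _ _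
    _ ≤ ∫⁻ s in Ioi 0, F t * F s :=
        setLIntegral_mono (by fun_prop) fun s hs => hmul t s ht (le_of_lt hs)

lemma setLIntegral_Ioi_mul_integral_eq (hF : Measurable F) {g : ℝ → ℝ} (hg : Continuous g)
    (hg_nonneg : ∀ t > 0, 0 ≤ g t) :
    ∫⁻ x in Ioi 0, F x * ENNReal.ofReal (∫ t in 0..x, g t)
      = ∫⁻ t in Ioi 0, (∫⁻ x in Ioi t, F x) * ENNReal.ofReal (g t) := by
  set μ := (volume.restrict (Ioi (0 : ℝ))).withDensity F
  have hμ : 0 ≤ᵐ[μ] id := by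
    refine (withDensity_absolutelyContinuous _ _).ae_le ?_
    filter_upwards [ae_restrict_mem measurableSet_Ioi] with x hx using le_of_lt hx
  have layer := lintegral_comp_eq_lintegral_meas_lt_mul μ hμ aemeasurable_id
    (fun t _ => hg.intervalIntegrable 0 t)
    ((ae_restrict_iff' measurableSet_Ioi).2 (ae_of_all _ hg_nonneg))
  rw [lintegral_withDensity_eq_lintegral_mul _ hF (by fun_prop)] at layer
  refine layer.trans (setLIntegral_congr_fun measurableSet_Ioi fun t ht => ?_)
  have hIoi : {a : ℝ | t < id a} = Ioi t := rfl
  rw [hIoi, withDensity_apply _ measurableSet_Ioi, Measure.restrict_restrict measurableSet_Ioi,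
    Ioi_inter_Ioi, sup_eq_left.2 (le_of_lt ht)]

lemma mul_setLIntegral_Ioi_mul_integral_le (hF : Measurable F)
    (hmul : ∀ x t, 0 ≤ x → 0 ≤ t → F 0 * F (x + t) ≤ F x * F t) {g : ℝ → ℝ} (hg : Continuous g)
    (hg_nonneg : ∀ t > 0, 0 ≤ g t) :
    F 0 * ∫⁻ x in Ioi 0, F x * ENNReal.ofReal (∫ t in 0..x, g t)
      ≤ (∫⁻ x in Ioi 0, F x) * ∫⁻ x in Ioi 0, F x * ENNReal.ofReal (g x) := by
  rw [setLIntegral_Ioi_mul_integral_eq hF hg hg_nonneg]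
  calc F 0 * ∫⁻ t in Ioi 0, (∫⁻ x in Ioi t, F x) * ENNReal.ofReal (g t)
      ≤ ∫⁻ t in Ioi 0, F 0 * ((∫⁻ x in Ioi t, F x) * ENNReal.ofReal (g t)) :=
        lintegral_const_mul_le _ _
    _ ≤ ∫⁻ t in Ioi 0, (∫⁻ x in Ioi 0, F x) * (F t * ENNReal.ofReal (g t)) := by
        refine setLIntegral_mono (by fun_prop) fun t ht => ?_
        rw [← mul_assoc, ← mul_assoc, mul_comm _ (F t)]
        exact mul_le_mul_left (mul_setLIntegral_Ioi_le hF hmul (le_of_lt ht)) _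
    _ = (∫⁻ x in Ioi 0, F x) * ∫⁻ x in Ioi 0, F x * ENNReal.ofReal (g x) :=
        lintegral_const_mul _ (by fun_prop)

end HalfLine

lemma ofReal_setIntegral_mul {α : Type*} [MeasurableSpace α] {μ : Measure α} {s : Set α}
    (hs : MeasurableSet s) {f w : α → ℝ} (hf : ∀ x, 0 ≤ f x) (hw : ∀ x ∈ s, 0 ≤ w x)
    (hi : IntegrableOn (fun x => w x * f x) s μ) :
    ENNReal.ofReal (∫ x in s, w x * f x ∂μ)
      = ∫⁻ x in s, ENNReal.ofReal (f x) * ENNReal.ofReal (w x) ∂μ := by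
  rw [ofReal_integral_eq_lintegral_ofReal hi
    ((ae_restrict_iff' hs).2 (ae_of_all _ fun x hx => mul_nonneg (hw x hx) (hf x)))]
  refine setLIntegral_congr_fun hs fun x hx => ?_
  rw [mul_comm, ENNReal.ofReal_mul (hf x)]

lemma mul_setIntegral_Ioi_integral_mul_le {f g : ℝ → ℝ} (hf : Measurable f)
    (hf_nonneg : ∀ x, 0 ≤ f x) (hmul : ∀ x t, 0 ≤ x → 0 ≤ t → f 0 * f (x + t) ≤ f x * f t)
    (hg : Continuous g) (hg_nonneg : ∀ t ≥ 0, 0 ≤ g t) (hf_int : IntegrableOn f (Ioi 0))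
    (hgf_int : IntegrableOn (fun x => g x * f x) (Ioi 0))
    (hGf_int : IntegrableOn (fun x => (∫ t in 0..x, g t) * f x) (Ioi 0)) :
    f 0 * ∫ x in Ioi 0, (∫ t in 0..x, g t) * f x
      ≤ (∫ x in Ioi 0, f x) * ∫ x in Ioi 0, g x * f x := by
  have hG_nonneg : ∀ x ∈ Ioi (0 : ℝ), 0 ≤ ∫ t in 0..x, g t := fun x hx =>
    intervalIntegral.integral_nonneg (le_of_lt hx) fun t ht => hg_nonneg t ht.1
  have hq : 0 ≤ ∫ x in Ioi 0, f x := setIntegral_nonneg measurableSet_Ioi fun x _ => hf_nonneg x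
  have hgf : 0 ≤ ∫ x in Ioi 0, g x * f x := setIntegral_nonneg measurableSet_Ioi fun x hx =>
    mul_nonneg (hg_nonneg x (le_of_lt hx)) (hf_nonneg x)
  have hFmul : ∀ x t, 0 ≤ x → 0 ≤ t → ENNReal.ofReal (f 0) * ENNReal.ofReal (f (x + t))
      ≤ ENNReal.ofReal (f x) * ENNReal.ofReal (f t) := fun x t hx ht => by
    rw [← ENNReal.ofReal_mul (hf_nonneg 0), ← ENNReal.ofReal_mul (hf_nonneg x)]
    exact ENNReal.ofReal_le_ofReal (hmul x t hx ht)
  have key := mul_setLIntegral_Ioi_mul_integral_le hf.ennreal_ofReal hFmul hg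
    fun t ht => hg_nonneg t ht.le
  rw [← ofReal_setIntegral_mul measurableSet_Ioi hf_nonneg hG_nonneg hGf_int,
    ← ofReal_setIntegral_mul measurableSet_Ioi hf_nonneg
      (fun t ht => hg_nonneg t (le_of_lt ht)) hgf_int,
    ← ofReal_integral_eq_lintegral_ofReal hf_int (ae_of_all _ hf_nonneg),
    ← ENNReal.ofReal_mul (hf_nonneg 0), ← ENNReal.ofReal_mul hq] at key
  exact (ENNReal.ofReal_le_ofReal_iff (mul_nonneg hq hgf)).1 key

lemma mul_setIntegral_Ioi_moments_le {f : ℝ → ℝ} (hf : Measurable f) (hf_nonneg : ∀ x, 0 ≤ f x)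
    (hmul : ∀ x t, 0 ≤ x → 0 ≤ t → f 0 * f (x + t) ≤ f x * f t)
    (h0 : IntegrableOn f (Ioi 0)) (h1 : IntegrableOn (fun x => x * f x) (Ioi 0))
    (h2 : IntegrableOn (fun x => x ^ 2 * f x) (Ioi 0)) :
    f 0 * ∫ x in Ioi 0, x * f x ≤ (∫ x in Ioi 0, f x) ^ 2 ∧
      f 0 * ∫ x in Ioi 0, x ^ 2 * f x ≤ 2 * (∫ x in Ioi 0, f x) * ∫ x in Ioi 0, x * f x := by
  have hx : ∀ x : ℝ, ∫ _ in 0..x, (1 : ℝ) = x := fun x => by simp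
  have hx2 : ∀ x : ℝ, ∫ t in 0..x, 2 * t = x ^ 2 := fun x => by
    rw [intervalIntegral.integral_const_mul, integral_id]; ring
  constructor
  · have := mul_setIntegral_Ioi_integral_mul_le hf hf_nonneg hmul continuous_const
      (fun _ _ => zero_le_one) h0 (by simpa only [one_mul] using h0) (by simpa only [hx] using h1)
    simpa [hx, sq] using this
  · have := mul_setIntegral_Ioi_integral_mul_le hf hf_nonneg hmul (continuous_const_mul 2)
      (fun t ht => by positivity) h0 (by simpa only [IntegrableOn, mul_assoc] using h1.const_mul 2)
      (by simpa only [hx2] using h2)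
    simp only [hx2, mul_assoc, integral_const_mul] at this
    linarith

lemma sq_mul_sub_sq_le_one {M p q A B S T : ℝ} (hM : 0 ≤ M) (hp : 0 ≤ p) (hq : 0 ≤ q)
    (hpq : p + q = 1) (hA : M * A ≤ p ^ 2) (hS : M * S ≤ 2 * p * A) (hB : M * B ≤ q ^ 2)
    (hT : M * T ≤ 2 * q * B) :
    M ^ 2 * (S + T - (B - A) ^ 2) ≤ 1 := by
  have hMS := mul_le_mul_of_nonneg_left hS hM
  have hMT := mul_le_mul_of_nonneg_left hT hM
  rcases le_total p q with hle | hle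
  · nlinarith [sq_nonneg (q - M * (B - A)), mul_le_mul_of_nonneg_left hle hp]
  · nlinarith [sq_nonneg (p + M * (B - A)), mul_le_mul_of_nonneg_left hle hq]

lemma sq_apply_zero_mul_variance_le_one {f : ℝ → ℝ} (hf : Measurable f)
    (hf_nonneg : ∀ x, 0 ≤ f x)
    (hfour : ∀ a b c d, a ≤ b → b ≤ d → a + d = b + c → f a * f d ≤ f b * f c)
    (h0 : Integrable f) (h1 : Integrable fun x => x * f x) (h2 : Integrable fun x => x ^ 2 * f x)
    (hmass : ∫ x, f x = 1) :
    f 0 ^ 2 * ((∫ x, x ^ 2 * f x) - (∫ x, x * f x) ^ 2) ≤ 1 := by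
  obtain ⟨hA, hS⟩ := mul_setIntegral_Ioi_moments_le hf hf_nonneg
    (fun x t hx ht => hfour 0 x t (x + t) hx (by linarith) (by ring))
    h0.integrableOn h1.integrableOn h2.integrableOn
  have h1' : Integrable fun x => x * f (-x) := by simpa using h1.comp_neg.neg
  have h2' : Integrable fun x => x ^ 2 * f (-x) := by simpa using h2.comp_neg
  obtain ⟨hB, hT⟩ := mul_setIntegral_Ioi_moments_le (f := fun x => f (-x))
    (hf.comp measurable_neg) (fun x => hf_nonneg (-x))
    (fun x t hx ht => by
      simpa [mul_comm] using hfour (-(x + t)) (-x) (-t) 0 (by linarith) (by linarith) (by ring))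
    h0.comp_neg.integrableOn h1'.integrableOn h2'.integrableOn
  have eP : ∫ x in Ioi 0, f (-x) = ∫ x in Iic 0, f x := by
    rw [integral_comp_neg_Ioi, neg_zero]
  have eB : ∫ x in Ioi 0, x * f (-x) = -∫ x in Iic 0, x * f x := by
    simpa [integral_neg] using integral_comp_neg_Ioi 0 fun y => -(y * f y)
  have eT : ∫ x in Ioi 0, x ^ 2 * f (-x) = ∫ x in Iic 0, x ^ 2 * f x := by
    have := integral_comp_neg_Ioi 0 fun y => y ^ 2 * f y
    simpa only [neg_sq, neg_zero] using this
  simp only [neg_zero, eP, eB, eT] at hB hT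
  have sP := intervalIntegral.integral_Iic_add_Ioi (b := 0) h0.integrableOn h0.integrableOn
  have sB := intervalIntegral.integral_Iic_add_Ioi (b := 0) h1.integrableOn h1.integrableOn
  have sT := intervalIntegral.integral_Iic_add_Ioi (b := 0) h2.integrableOn h2.integrableOn
  have hp := setIntegral_nonneg (μ := volume) measurableSet_Iic fun x (_ : x ∈ Iic 0) =>
    hf_nonneg x
  have hq := setIntegral_nonneg (μ := volume) measurableSet_Ioi fun x (_ : x ∈ Ioi 0) =>
    hf_nonneg x
  rw [← sB, ← sT]
  convert sq_mul_sub_sq_le_one (hf_nonneg 0) hp hq (sP.trans hmass) hB hT hA hS using 2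
  ring

lemma sq_apply_mul_variance_le_one {f : ℝ → ℝ} (hf : Measurable f) (hf_nonneg : ∀ x, 0 ≤ f x)
    (hfour : ∀ a b c d, a ≤ b → b ≤ d → a + d = b + c → f a * f d ≤ f b * f c)
    (h0 : Integrable f) (h1 : Integrable fun x => x * f x) (h2 : Integrable fun x => x ^ 2 * f x)
    (hmass : ∫ x, f x = 1) (x₀ : ℝ) :
    f x₀ ^ 2 * ((∫ x, x ^ 2 * f x) - (∫ x, x * f x) ^ 2) ≤ 1 := by
  have hexp : ∀ y, (y - x₀) ^ 2 * f y = y ^ 2 * f y - 2 * x₀ * (y * f y) + x₀ ^ 2 * f y :=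
    fun y => by ring
  have i21 : Integrable fun y => y ^ 2 * f y - 2 * x₀ * (y * f y) := h2.sub (h1.const_mul _)
  have i1 : Integrable fun y => (y - x₀) * f y := by
    simp_rw [sub_mul]
    exact h1.sub (h0.const_mul x₀)
  have i2 : Integrable fun y => (y - x₀) ^ 2 * f y := by
    simp_rw [hexp]
    exact i21.add (h0.const_mul _)
  have e1 : ∫ y, (y - x₀) * f y = (∫ y, y * f y) - x₀ := by
    simp_rw [sub_mul]
    rw [integral_sub h1 (h0.const_mul x₀), integral_const_mul, hmass, mul_one]
  have e2 : ∫ y, (y - x₀) ^ 2 * f y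
      = (∫ y, y ^ 2 * f y) - 2 * x₀ * (∫ y, y * f y) + x₀ ^ 2 := by
    simp_rw [hexp]
    rw [integral_add i21 (h0.const_mul _), integral_sub h2 (h1.const_mul _),
      integral_const_mul, integral_const_mul, hmass, mul_one]
  have m1 : ∫ x, x * f (x₀ + x) = ∫ y, (y - x₀) * f y := by
    simpa using integral_add_left_eq_self (fun y => (y - x₀) * f y) x₀
  have m2 : ∫ x, x ^ 2 * f (x₀ + x) = ∫ y, (y - x₀) ^ 2 * f y := by
    simpa using integral_add_left_eq_self (fun y => (y - x₀) ^ 2 * f y) x₀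
  have key := sq_apply_zero_mul_variance_le_one (f := fun x => f (x₀ + x))
    (hf.comp (measurable_const_add x₀)) (fun x => hf_nonneg _)
    (fun a b c d hab hbd hsum => hfour _ _ _ _ (by linarith) (by linarith) (by linarith))
    (h0.comp_add_left x₀) (by simpa using i1.comp_add_left x₀)
    (by simpa using i2.comp_add_left x₀) (by rw [integral_add_left_eq_self]; exact hmass)
  rw [m1, m2, e1, e2, add_zero] at key
  linarith

/-- An isotropic logconcave probability density on ℝ is bounded above by 1. -/
theorem stmt_10 (f : ℝ → ℝ) (h : ℝ → ℝ)
    (hconc : ConcaveOn ℝ Set.univ h) (hfh : ∀ x, f x = Real.exp (h x))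
    (hint : Integrable f) (hdens : ∫ x, f x = 1)
    (hmean_int : Integrable (fun x => x * f x)) (hmean : ∫ x, x * f x = 0)
    (hvar_int : Integrable (fun x => x ^ 2 * f x)) (hvar : ∫ x, x ^ 2 * f x = 1) :
    ∀ x, f x ≤ 1 := by
  have hcont : Continuous f := by
    rw [funext hfh]
    exact Real.continuous_exp.comp (continuousOn_univ.mp (hconc.continuousOn isOpen_univ))
  have hpos : ∀ x, 0 < f x := fun x => hfh x ▸ Real.exp_pos _
  have hfour : ∀ a b c d, a ≤ b → b ≤ d → a + d = b + c → f a * f d ≤ f b * f c := by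
    intro a b c d hab hbd hsum
    simp only [hfh, ← Real.exp_add]
    exact Real.exp_le_exp.2 (hconc.add_le_add_of_add_eq (mem_univ a) (mem_univ d) hab hbd hsum)
  intro x
  have key := sq_apply_mul_variance_le_one hcont.measurable (fun y => (hpos y).le) hfour hint
    hmean_int hvar_int hdens x
  rw [hmean, hvar] at key
  nlinarith [hpos x]
end
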